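/- For every natural number n, the identities A_n(X−i) + C_n(X) = (X−i)·Xⁿ and A_n(X+i) + C_n(X) = (X+i)·Xⁿ hold in the polynomial ring ℂ[X] (equivalently, they hold after evaluation at every complex number x). -/

import Mathlib

open Polynomial Finset

/-- The pair of polynomial sequences (Aₙ, Cₙ) from the paper:
A₀ = X, C₀ = 0, and
A_{n+1} = ((n+1)/(n+2))·(X·Aₙ + ∑_{k=0}^{n} λₙᵏ·A_k),
C_{n+1} = ((n+1)/(n+2))·((X²+1)·Xⁿ + ∑_{k=0}^{n} λₙᵏ·C_k),
where λₙᵏ is the coefficient of Xᵏ in Cₙ. -/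
noncomputable def AC : ℕ → Polynomial ℂ × Polynomial ℂ
  | 0 => (Polynomial.X, 0)
  | (n+1) =>
    (((n+1 : ℂ)/(n+2)) • (Polynomial.X * (AC n).1 +
        ∑ k ∈ (Finset.range (n+1)).attach, ((AC n).2.coeff k) • (AC k).1),
     ((n+1 : ℂ)/(n+2)) • ((Polynomial.X^2 + 1) * Polynomial.X^n +
        ∑ k ∈ (Finset.range (n+1)).attach, ((AC n).2.coeff k) • (AC k).2))
  decreasing_by
  all_goals first
    | exact Nat.lt_succ_self n
    | exact Nat.lt_succ_of_lt (Finset.mem_range.mp k.2)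
    | exact Finset.mem_range.mp k.2

noncomputable def polyA (n : ℕ) : Polynomial ℂ := (AC n).1
noncomputable def polyC (n : ℕ) : Polynomial ℂ := (AC n).2

/-!
For `e` with `e² = -1` one shows `Aₙ(X + e) + Cₙ = (X + e)·Xⁿ` by strong induction. In the
inductive step the hypothesis turns `∑ λₙᵏ (A_k(X + e) + C_k)` into `(X + e)·∑_{k ≤ n} λₙᵏ Xᵏ`,
which is `(X + e)(Cₙ - λₙⁿ⁺¹ Xⁿ⁺¹)` because `deg Cₙ ≤ n + 1`, and `λₙⁿ⁺¹ = n/(n+1)`.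
Since `(X + e)² + X² + 1 = 2X(X + e)`, everything collapses to
`(n+1)/(n+2) · (2 - n/(n+1)) · (X + e)Xⁿ⁺¹ = (X + e)Xⁿ⁺¹`. The roots `e = ±i` give the two identities.
-/

lemma polyA_zero : polyA 0 = X := by rw [polyA, AC]

lemma polyC_zero : polyC 0 = 0 := by rw [polyC, AC]

lemma polyA_succ (n : ℕ) : polyA (n + 1) =
    ((n + 1 : ℂ) / (n + 2)) • (X * polyA n + ∑ k ∈ range (n + 1), (polyC n).coeff k • polyA k) := by
  rw [polyA, AC]
  exact congrArg (_ • ·) (congrArg (X * polyA n + ·)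
    (sum_attach (range (n + 1)) fun k => (polyC n).coeff k • polyA k))

lemma polyC_succ (n : ℕ) : polyC (n + 1) =
    ((n + 1 : ℂ) / (n + 2)) • ((X ^ 2 + 1) * X ^ n +
      ∑ k ∈ range (n + 1), (polyC n).coeff k • polyC k) := by
  rw [polyC, AC]
  exact congrArg (_ • ·) (congrArg ((X ^ 2 + 1) * X ^ n + ·)
    (sum_attach (range (n + 1)) fun k => (polyC n).coeff k • polyC k))

lemma natDegree_polyC_le (n : ℕ) : (polyC n).natDegree ≤ n + 1 := by
  induction n using Nat.strong_induction_on with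
  | _ n ih =>
    cases n with
    | zero => simp [polyC_zero]
    | succ n =>
      rw [polyC_succ]
      refine (natDegree_smul_le _ _).trans ((natDegree_add_le _ _).trans (max_le ?_ ?_))
      · have : ((X ^ 2 + 1) * X ^ n : ℂ[X]).natDegree ≤ 2 + n :=
          natDegree_mul_le_of_le ((natDegree_add_le _ _).trans (by simp)) (natDegree_X_pow_le n)
        omega
      · refine natDegree_sum_le_of_forall_le _ _ fun k hk => (natDegree_smul_le _ _).trans ?_
        have hk := mem_range.mp hk
        have := ih k (by omega)
        omega

lemma coeff_polyC_self_add_one (n : ℕ) : (polyC n).coeff (n + 1) = n / (n + 1) := by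
  cases n with
  | zero => simp [polyC_zero]
  | succ n =>
    have hX : ((X ^ 2 + 1) * X ^ n : ℂ[X]).coeff (n + 2) = 1 := by
      rw [add_mul, one_mul, ← pow_add, add_comm 2 n, coeff_add, coeff_X_pow_self, coeff_X_pow,
        if_neg (by omega), add_zero]
    have hsum : (∑ k ∈ range (n + 1), (polyC n).coeff k • polyC k).coeff (n + 2) = 0 := by
      rw [finsetSum_coeff]
      refine sum_eq_zero fun k hk => ?_
      have hk := mem_range.mp hk
      have := natDegree_polyC_le k
      rw [coeff_smul, coeff_eq_zero_of_natDegree_lt (p := polyC k) (by omega), smul_zero]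
    rw [polyC_succ, coeff_smul, coeff_add, hX, hsum, smul_eq_mul]
    push_cast
    ring

lemma sum_range_coeff_smul_X_pow {R : Type*} [Ring R] {p : R[X]} {n : ℕ}
    (hp : p.natDegree ≤ n + 1) :
    ∑ k ∈ range (n + 1), p.coeff k • (X : R[X]) ^ k = p - C (p.coeff (n + 1)) * X ^ (n + 1) := by
  rw [eq_sub_iff_add_eq, eq_comm]
  simp only [smul_eq_C_mul]
  rw [← sum_range_succ (fun k => C (p.coeff k) * X ^ k)]
  exact p.as_sum_range_C_mul_X_pow' (Nat.lt_succ_of_le hp)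

lemma polyA_comp_add_polyC {e : ℂ} (he : e ^ 2 = -1) (n : ℕ) :
    (polyA n).comp (X + C e) + polyC n = (X + C e) * X ^ n := by
  induction n using Nat.strong_induction_on with
  | _ n ih =>
    cases n with
    | zero => simp [polyA_zero, polyC_zero]
    | succ n =>
      have hsum : ∑ k ∈ range (n + 1), (polyC n).coeff k • ((polyA k).comp (X + C e) + polyC k) =
          (X + C e) * (polyC n - C (n / (n + 1) : ℂ) * X ^ (n + 1)) := by
        rw [← coeff_polyC_self_add_one, ← sum_range_coeff_smul_X_pow (natDegree_polyC_le n),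
          mul_sum]
        refine sum_congr rfl fun k hk => ?_
        rw [ih k (mem_range.mp hk), mul_smul_comm]
      have hc : C ((n + 1 : ℂ) / (n + 2)) * (2 - C (n / (n + 1) : ℂ)) = 1 := by
        rw [← C_ofNat, ← C_sub, ← C_mul, ← C_1]
        congr 1
        have : (n + 2 : ℂ) ≠ 0 := by norm_cast
        have : (n + 1 : ℂ) ≠ 0 := by norm_cast
        field_simp
        ring
      have heC : (C e : ℂ[X]) ^ 2 = -1 := by rw [← C_pow, he, C_neg, C_1]
      rw [polyA_succ, polyC_succ]
      simp only [add_comp, mul_comp, X_comp, Polynomial.sum_comp, smul_add,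
        sum_add_distrib, smul_eq_C_mul, C_comp] at hsum ⊢
      linear_combination C ((n + 1 : ℂ) / (n + 2)) * hsum
        + C ((n + 1 : ℂ) / (n + 2)) * (X + C e) * ih n (lt_add_one n)
        + C ((n + 1 : ℂ) / (n + 2)) * X ^ n * heC + (X + C e) * X ^ (n + 1) * hc

theorem stmt2 (n : ℕ) :
    (polyA n).comp (Polynomial.X - Polynomial.C Complex.I) + polyC n =
      (Polynomial.X - Polynomial.C Complex.I) * Polynomial.X ^ n ∧
    (polyA n).comp (Polynomial.X + Polynomial.C Complex.I) + polyC n =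
      (Polynomial.X + Polynomial.C Complex.I) * Polynomial.X ^ n := by
  have hI : (-Complex.I) ^ 2 = -1 := by rw [neg_sq, Complex.I_sq]
  constructor
  · simpa only [C_neg, ← sub_eq_add_neg] using polyA_comp_add_polyC hI n
  · exact polyA_comp_add_polyC Complex.I_sq n
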